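/- Let p ≥ 2 be an integer. Assume there exist nonzero real numbers a_1 = 1, a_2, …, a_p such that ⟨E_{M1⋯Mk} | F^{N1⋯Nk}⟩ = a_k (ℙ_k)_{M1⋯Mk}^{N1⋯Nk} for k = 2, …, p. Then for all indices M1, …, Mp, N1, …, Np the following identity holds in U_0: ⟦E_{M1⋯Mp}, F^{N1⋯Np}⟧ = a_p Σ_{P1,…,Pp} (ℙ_p)_{M1⋯Mp}^{P1⋯Pp} Σ_{i=1}^{p} δ_{P1}^{N1} ⋯ δ_{P(i−1)}^{N(i−1)} ⟦E_{Pi}, F^{Ni}⟧ δ_{P(i+1)}^{N(i+1)} ⋯ δ_{Pp}^{Np}, where in the i-th summand the scalar product of Kronecker deltas multiplies the element ⟦E_{Pi}, F^{Ni}⟧ ∈ U_0. -/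

import Mathlib

/-!
Induct on `p` in the form `⟦E_M, F^N⟧ = a_p Σ_i Σ_q ℙ_p(M, N[i ↦ q]) ⟦E_q, F^{N_i}⟧`, which is
the claim with the Kronecker deltas summed out. Writing `F^N = ⟦F^{N_1}, F^{N'}⟧`, the Jacobi
identity splits `⟦E_M, F^N⟧` into `⟦⟦E_M, F^{N_1}⟧, F^{N'}⟧` and `±⟦F^{N_1}, ⟦E_M, F^{N'}⟧⟧`.
The inner brackets lie in `U_{1-p}` and `U_{-1}`; these are spanned by `E`-nests, and since
`⟨E_A|F^B⟩ = a ℙ(A, B)` with `ℙ` fixing the `E`-nests, every `x` there equals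
`a⁻¹ Σ_B ⟨x|F^B⟩ E_B`, where invariance of the form turns the coefficients into entries of
`a_p ℙ_p`. In the first term the induction hypothesis applies, and the nesting property of `ℙ_p`
together with idempotency of `ℙ_{p-1}` absorbs `ℙ_{p-1}` into `ℙ_p`; the second term is the
`i = 1` summand.
-/

/-- Nested bracket `⟦f M1, ⟦f M2, …, ⟦f M(k-1), f Mk⟧⋯⟧⟧` of a family `f : ι → V`
along a tuple of `k` indices (junk value `0` for `k = 0`). -/
def nest {V : Type} [AddCommGroup V] [Module ℝ V] {ι : Type}
    (bb : V →ₗ[ℝ] V →ₗ[ℝ] V) (f : ι → V) : (k : ℕ) → (Fin k → ι) → V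
  | 0, _ => 0
  | 1, M => f (M 0)
  | (k + 2), M => bb (f (M 0)) (nest bb f (k + 1) (fun i => M i.succ))

open Finset Function

section Tuples

variable {ι : Type*} [Fintype ι] [DecidableEq ι]

theorem sum_prod_erase_ite_smul {R V : Type*} [CommSemiring R] [AddCommMonoid V] [Module R V]
    {m : ℕ} (i : Fin m) (N : Fin m → ι) (h : (Fin m → ι) → V) :
    ∑ Q : Fin m → ι, (∏ j ∈ univ.erase i, if Q j = N j then (1 : R) else 0) • h Q
      = ∑ q : ι, h (update N i q) := by
  have himage : univ.filter (fun Q : Fin m → ι => ∀ j ∈ univ.erase i, Q j = N j)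
      = univ.image (update N i) := by
    ext Q
    simp only [mem_filter, mem_univ, true_and, mem_image, update_eq_iff, mem_erase]
    exact ⟨fun hQ => ⟨Q i, rfl, fun j hj => (hQ j ⟨hj, trivial⟩).symm⟩,
      fun ⟨_, _, hN⟩ j hj => (hN j hj.1).symm⟩
  simp_rw [prod_boole, ite_smul, one_smul, zero_smul]
  rw [← sum_filter, himage, sum_image fun _ _ _ _ h => update_injective N i h]

theorem sum_smul_sum_prod_erase_ite_smul {R V : Type*} [CommSemiring R] [AddCommMonoid V]
    [Module R V] {m : ℕ} (c : (Fin m → ι) → R) (N : Fin m → ι) (x : Fin m → ι → V) :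
    ∑ Q : Fin m → ι, c Q • ∑ i, (∏ j ∈ univ.erase i, if Q j = N j then (1 : R) else 0) • x i (Q i)
      = ∑ i, ∑ q, c (update N i q) • x i q := by
  simp_rw [smul_sum, smul_comm (c _)]
  rw [sum_comm]
  refine sum_congr rfl fun i _ => ?_
  rw [sum_prod_erase_ite_smul i N fun Q => c Q • x i (Q i)]
  simp only [update_self]

omit [DecidableEq ι] in
theorem sum_fin_one {M : Type*} [AddCommMonoid M] (g : (Fin 1 → ι) → M) :
    ∑ B, g B = ∑ q, g fun _ => q :=
  ((Equiv.funUnique (Fin 1) ι).symm.sum_comp g).symm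

omit [Fintype ι] [DecidableEq ι] in
theorem update_succ_eq_cons_update {m : ℕ} (N : Fin (m + 1) → ι) (i : Fin m) (q : ι) :
    update N i.succ q = Fin.cons (N 0) (update (Fin.tail N) i q) := by
  rw [Fin.cons_update, Fin.cons_self_tail]

end Tuples

section Nest

variable {V : Type} [AddCommGroup V] [Module ℝ V] {ι : Type} (bb : V →ₗ[ℝ] V →ₗ[ℝ] V) (f : ι → V)

theorem nest_cons (m : ℕ) (q : ι) (B : Fin (m + 1) → ι) :
    nest bb f (m + 2) (Fin.cons q B) = bb (f q) (nest bb f (m + 1) B) :=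
  rfl

theorem nest_mem {U : ℤ → Submodule ℝ V}
    (hgrade : ∀ (p q : ℤ) (x y : V), x ∈ U p → y ∈ U q → bb x y ∈ U (p + q))
    {d : ℤ} (hf : ∀ i, f i ∈ U d) : ∀ (m : ℕ) (M : Fin (m + 1) → ι),
    nest bb f (m + 1) M ∈ U ((m + 1) * d)
  | 0, M => by simpa [nest] using hf (M 0)
  | m + 1, M => by
    have h := hgrade _ _ _ _ (hf (M 0)) (nest_mem hgrade hf m fun i => M i.succ)
    rwa [show d + (m + 1) * d = ((m + 1 : ℕ) + 1) * d by push_cast; ring] at h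

end Nest

theorem eq_inv_smul_sum_form_smul_of_mem_span {K V β : Type*} [Field K] [AddCommGroup V]
    [Module K V] [Fintype β] (form : V →ₗ[K] V →ₗ[K] K) (e f : β → V) (c : β → β → K) {a : K}
    (ha : a ≠ 0)
    (hpair : ∀ A B, form (e A) (f B) = a * c A B) (hproj : ∀ A, e A = ∑ B, c A B • e B)
    {x : V} (hx : x ∈ Submodule.span K (Set.range e)) :
    x = a⁻¹ • ∑ B, form x (f B) • e B := by
  let T : V →ₗ[K] V := a⁻¹ • ∑ B, LinearMap.smulRight (form.flip (f B)) (e B)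
  have hT : ∀ y, T y = a⁻¹ • ∑ B, form y (f B) • e B := fun y => by simp [T]
  have hTe : Set.EqOn (LinearMap.id : V →ₗ[K] V) T (Set.range e) := by
    rintro _ ⟨A, rfl⟩
    simp only [LinearMap.id_apply, hT, hpair, mul_smul, ← Finset.smul_sum, inv_smul_smul₀ ha]
    exact hproj A
  rw [← hT]
  exact LinearMap.eqOn_span' hTe hx

theorem sum_cons_mul_eq_of_nested {R ι : Type*} [CommSemiring R] [Fintype ι] {m : ℕ}
    (P' : (Fin (m + 1) → ι) → (Fin (m + 1) → ι) → R) (P : (Fin m → ι) → (Fin m → ι) → R)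
    (M : Fin (m + 1) → ι)
    (hnest : ∀ N, P' M N = ∑ A, ∑ B,
      P (Fin.tail M) A * P' (Fin.cons (M 0) A) (Fin.cons (N 0) B) * P B (Fin.tail N))
    (hidem : ∀ A B, ∑ Q, P A Q * P Q B = P A B) (n₀ : ι) (Q : Fin m → ι) :
    ∑ B, P' M (Fin.cons n₀ B) * P B Q = P' M (Fin.cons n₀ Q) := by
  simp only [hnest, Fin.cons_zero, Fin.tail_cons, sum_mul]
  rw [sum_comm]
  refine sum_congr rfl fun A _ => ?_
  rw [sum_comm]
  refine sum_congr rfl fun C _ => ?_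
  simp only [mul_assoc, ← mul_sum, hidem]

section Hierarchy

variable {V : Type} [AddCommGroup V] [Module ℝ V] {U : ℤ → Submodule ℝ V}
  {bb : V →ₗ[ℝ] V →ₗ[ℝ] V} {form : V →ₗ[ℝ] V →ₗ[ℝ] ℝ} {ι : Type} [Fintype ι]
  {E F : ι → V} {P : (m : ℕ) → (Fin m → ι) → (Fin m → ι) → ℝ} {a : ℕ → ℝ}

theorem bracket_bracket_nest_F_nest {m : ℕ} (M N : Fin (m + 2) → ι)
    (hforminv : ∀ x y z : V, form (bb x y) z = form x (bb y z))
    (hmem : bb (nest bb E (m + 2) M) (F (N 0)) ∈ U (-((m + 1 : ℕ) : ℤ)))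
    (hexp : ∀ x ∈ U (-((m + 1 : ℕ) : ℤ)),
      x = (a (m + 1))⁻¹ • ∑ B, form x (nest bb F (m + 1) B) • nest bb E (m + 1) B)
    (ha : a (m + 1) ≠ 0)
    (hpair : ∀ B, form (nest bb E (m + 2) M) (nest bb F (m + 2) B) = a (m + 2) * P (m + 2) M B)
    (habs : ∀ Q, ∑ B, P (m + 2) M (Fin.cons (N 0) B) * P (m + 1) B Q
      = P (m + 2) M (Fin.cons (N 0) Q))
    (ih : ∀ B, bb (nest bb E (m + 1) B) (nest bb F (m + 1) (Fin.tail N)) = a (m + 1) •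
      ∑ i, ∑ q, P (m + 1) B (update (Fin.tail N) i q) • bb (E q) (F (Fin.tail N i))) :
    bb (bb (nest bb E (m + 2) M) (F (N 0))) (nest bb F (m + 1) (Fin.tail N)) = a (m + 2) •
      ∑ i : Fin (m + 1), ∑ q, P (m + 2) M (update N i.succ q) • bb (E q) (F (N i.succ)) := by
  have hcoeff : ∀ B, form (bb (nest bb E (m + 2) M) (F (N 0))) (nest bb F (m + 1) B)
      = a (m + 2) * P (m + 2) M (Fin.cons (N 0) B) := fun B => by
    rw [hforminv, ← nest_cons, hpair]
  rw [hexp _ hmem]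
  simp only [hcoeff, map_smul, map_sum, LinearMap.smul_apply, LinearMap.sum_apply, ih, smul_sum,
    smul_smul]
  rw [sum_comm]
  refine sum_congr rfl fun i _ => ?_
  rw [sum_comm]
  refine sum_congr rfl fun q _ => ?_
  rw [← sum_smul, update_succ_eq_cons_update, ← habs, mul_sum]
  congr 1
  refine sum_congr rfl fun B _ => ?_
  field_simp

theorem bracket_F_bracket_nest_nest {m : ℕ} (M N : Fin (m + 2) → ι)
    (hanti : ∀ (p q : ℤ) (x y : V), x ∈ U p → y ∈ U q →
      bb x y = (-((-1 : ℝ) ^ (p * q))) • bb y x)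
    (hforminv : ∀ x y z : V, form (bb x y) z = form x (bb y z))
    (hE : ∀ q, E q ∈ U (-1)) (hF : ∀ q, F q ∈ U 1)
    (hFN : nest bb F (m + 1) (Fin.tail N) ∈ U ((m : ℤ) + 1))
    (hmem : bb (nest bb E (m + 2) M) (nest bb F (m + 1) (Fin.tail N)) ∈ U (-1))
    (hexp : ∀ y ∈ U (-1), y = ∑ q, form y (F q) • E q)
    (hpair : ∀ B, form (nest bb E (m + 2) M) (nest bb F (m + 2) B) = a (m + 2) * P (m + 2) M B) :
    (-1 : ℝ) ^ (-((m : ℤ) + 2) * 1) •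
        bb (F (N 0)) (bb (nest bb E (m + 2) M) (nest bb F (m + 1) (Fin.tail N)))
      = a (m + 2) • ∑ q, P (m + 2) M (update N 0 q) • bb (E q) (F (N 0)) := by
  have hcoeff : ∀ q, form (bb (nest bb E (m + 2) M) (nest bb F (m + 1) (Fin.tail N))) (F q)
      = -(-1 : ℝ) ^ (((m : ℤ) + 1) * 1) * (a (m + 2) * P (m + 2) M (update N 0 q)) := fun q => by
    rw [hforminv, hanti _ _ _ _ hFN (hF q), map_smul, ← nest_cons, hpair, ← Fin.update_cons_zero,
      Fin.cons_self_tail, smul_eq_mul]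
  rw [hexp _ hmem]
  simp only [hcoeff, map_sum, map_smul, hanti _ _ _ _ (hF (N 0)) (hE _), smul_sum, smul_smul]
  refine sum_congr rfl fun q _ => ?_
  congr 1
  -- the Jacobi sign `(-1)^(-(m+2))` cancels the antisymmetry signs `-(-1)^(m+1)` and `1`
  simp [zpow_add₀, zpow_neg]

theorem bracket_nest_nest_succ {m : ℕ} (M N : Fin (m + 2) → ι)
    (hgrade : ∀ (p q : ℤ) (x y : V), x ∈ U p → y ∈ U q → bb x y ∈ U (p + q))
    (hanti : ∀ (p q : ℤ) (x y : V), x ∈ U p → y ∈ U q →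
      bb x y = (-((-1 : ℝ) ^ (p * q))) • bb y x)
    (hjac : ∀ (p q : ℤ) (x y z : V), x ∈ U p → y ∈ U q →
      bb (bb x y) z = bb x (bb y z) - ((-1 : ℝ) ^ (p * q)) • bb y (bb x z))
    (hforminv : ∀ x y z : V, form (bb x y) z = form x (bb y z))
    (hE : ∀ q, E q ∈ U (-1)) (hF : ∀ q, F q ∈ U 1)
    (hexp : ∀ x ∈ U (-((m + 1 : ℕ) : ℤ)),
      x = (a (m + 1))⁻¹ • ∑ B, form x (nest bb F (m + 1) B) • nest bb E (m + 1) B)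
    (hexp₁ : ∀ y ∈ U (-1), y = ∑ q, form y (F q) • E q)
    (ha : a (m + 1) ≠ 0)
    (hpair : ∀ B, form (nest bb E (m + 2) M) (nest bb F (m + 2) B) = a (m + 2) * P (m + 2) M B)
    (habs : ∀ Q, ∑ B, P (m + 2) M (Fin.cons (N 0) B) * P (m + 1) B Q
      = P (m + 2) M (Fin.cons (N 0) Q))
    (ih : ∀ B, bb (nest bb E (m + 1) B) (nest bb F (m + 1) (Fin.tail N)) = a (m + 1) •
      ∑ i, ∑ q, P (m + 1) B (update (Fin.tail N) i q) • bb (E q) (F (Fin.tail N i))) :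
    bb (nest bb E (m + 2) M) (nest bb F (m + 2) N)
      = a (m + 2) • ∑ i, ∑ q, P (m + 2) M (update N i q) • bb (E q) (F (N i)) := by
  set x := nest bb E (m + 2) M
  have hx : x ∈ U (-((m : ℤ) + 2)) := by
    convert nest_mem bb E hgrade hE (m + 1) M using 2
    push_cast; ring
  have hFN : nest bb F (m + 1) (Fin.tail N) ∈ U ((m : ℤ) + 1) := by
    simpa using nest_mem bb F hgrade hF m (Fin.tail N)
  have hjacobi : bb x (nest bb F (m + 2) N)
      = bb (bb x (F (N 0))) (nest bb F (m + 1) (Fin.tail N))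
        + (-1 : ℝ) ^ (-((m : ℤ) + 2) * 1) •
          bb (F (N 0)) (bb x (nest bb F (m + 1) (Fin.tail N))) := by
    change bb x (bb (F (N 0)) (nest bb F (m + 1) (Fin.tail N))) = _
    rw [hjac _ _ _ _ _ hx (hF _)]
    abel
  have hxF : bb x (F (N 0)) ∈ U (-((m + 1 : ℕ) : ℤ)) := by
    convert hgrade _ _ _ _ hx (hF (N 0)) using 2
    push_cast; ring
  have hxFN : bb x (nest bb F (m + 1) (Fin.tail N)) ∈ U (-1) := by
    convert hgrade _ _ _ _ hx hFN using 2
    ring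
  rw [hjacobi, bracket_bracket_nest_F_nest M N hforminv hxF hexp ha hpair habs ih,
    bracket_F_bracket_nest_nest M N hanti hforminv hE hF hFN hxFN hexp₁ hpair,
    Fin.sum_univ_succ (n := m + 1), smul_add, add_comm]

theorem bracket_nest_nest_eq_sum_update [DecidableEq ι] (n : ℕ)
    (hgrade : ∀ (p q : ℤ) (x y : V), x ∈ U p → y ∈ U q → bb x y ∈ U (p + q))
    (hanti : ∀ (p q : ℤ) (x y : V), x ∈ U p → y ∈ U q →
      bb x y = (-((-1 : ℝ) ^ (p * q))) • bb y x)
    (hjac : ∀ (p q : ℤ) (x y z : V), x ∈ U p → y ∈ U q →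
      bb (bb x y) z = bb x (bb y z) - ((-1 : ℝ) ^ (p * q)) • bb y (bb x z))
    (hforminv : ∀ x y z : V, form (bb x y) z = form x (bb y z))
    (hE : ∀ q, E q ∈ U (-1)) (hF : ∀ q, F q ∈ U 1)
    (hspanE : ∀ m : ℕ, 1 ≤ m → U (-(m : ℤ)) ≤ Submodule.span ℝ (Set.range (nest bb E m)))
    (hP1 : ∀ M N : Fin 1 → ι, P 1 M N = if M 0 = N 0 then (1 : ℝ) else 0)
    (hPnest : ∀ m : ℕ, 2 ≤ m + 1 → m + 1 ≤ n → ∀ M N : Fin (m + 1) → ι,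
      P (m + 1) M N = ∑ A : Fin m → ι, ∑ B : Fin m → ι,
        P m (Fin.tail M) A * P (m + 1) (Fin.cons (M 0) A) (Fin.cons (N 0) B) *
          P m B (Fin.tail N))
    (ha1 : a 1 = 1)
    (hane : ∀ m, 1 ≤ m → m ≤ n → a m ≠ 0)
    (hpair : ∀ m, 1 ≤ m → m ≤ n → ∀ A B : Fin m → ι,
      form (nest bb E m A) (nest bb F m B) = a m * P m A B)
    (hidem : ∀ m, 1 ≤ m → m ≤ n → ∀ A B : Fin m → ι, ∑ Q, P m A Q * P m Q B = P m A B)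
    (hproj : ∀ m, 1 ≤ m → m ≤ n → ∀ A : Fin m → ι, nest bb E m A = ∑ B, P m A B • nest bb E m B) :
    ∀ m, 1 ≤ m → m ≤ n → ∀ M N : Fin m → ι, bb (nest bb E m M) (nest bb F m N)
      = a m • ∑ i, ∑ q, P m M (update N i q) • bb (E q) (F (N i)) := by
  have hexp : ∀ m, 1 ≤ m → m ≤ n → ∀ x ∈ U (-(m : ℤ)),
      x = (a m)⁻¹ • ∑ B, form x (nest bb F m B) • nest bb E m B := fun m h1 h2 x hx =>
    eq_inv_smul_sum_form_smul_of_mem_span form _ _ (P m) (hane m h1 h2) (hpair m h1 h2)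
      (hproj m h1 h2) (hspanE m h1 hx)
  intro m h1
  induction m, h1 using Nat.le_induction with
  | base =>
    intro _ M N
    simp [nest, ha1, hP1]
  | succ m h1 ih =>
    obtain ⟨m, rfl⟩ : ∃ j, m = j + 1 := ⟨m - 1, by omega⟩
    intro hle M N
    have hexp₁ : ∀ y ∈ U (-1), y = ∑ q, form y (F q) • E q := fun y hy => by
      simpa [nest, ha1, sum_fin_one] using hexp 1 le_rfl (by omega) y hy
    exact bracket_nest_nest_succ M N hgrade hanti hjac hforminv hE hF (hexp _ h1 (by omega))
      hexp₁ (hane _ h1 (by omega)) (hpair _ (by omega) hle M)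
      (sum_cons_mul_eq_of_nested _ _ M (hPnest _ (by omega) hle M) (hidem _ h1 (by omega)) (N 0))
      (fun B => ih (by omega) B (Fin.tail N))

end Hierarchy

theorem bracket_E_multi_with_F_multi_general
    {V : Type} [AddCommGroup V] [Module ℝ V]
    (U : ℤ → Submodule ℝ V)
    (bb : V →ₗ[ℝ] V →ₗ[ℝ] V)
    (form : V →ₗ[ℝ] V →ₗ[ℝ] ℝ)
    (hgrade : ∀ (p q : ℤ) (x y : V), x ∈ U p → y ∈ U q → bb x y ∈ U (p + q))
    (hanti : ∀ (p q : ℤ) (x y : V), x ∈ U p → y ∈ U q →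
      bb x y = (-((-1 : ℝ) ^ (p * q))) • bb y x)
    (hjac : ∀ (p q : ℤ) (x y z : V), x ∈ U p → y ∈ U q →
      bb (bb x y) z = bb x (bb y z) - ((-1 : ℝ) ^ (p * q)) • bb y (bb x z))
    (hforminv : ∀ x y z : V, form (bb x y) z = form x (bb y z))
    {ι : Type} [Fintype ι] [DecidableEq ι]
    (E F : ι → V)
    (hE : ∀ M, E M ∈ U (-1))
    (hF : ∀ M, F M ∈ U 1)
    (hEF : ∀ M N, form (E M) (F N) = if M = N then (1 : ℝ) else 0)
    (hspanE : ∀ m : ℕ, 1 ≤ m → U (-(m : ℤ)) ≤ Submodule.span ℝ (Set.range (nest bb E m)))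
    (k : ℕ)
    (P : (m : ℕ) → (Fin m → ι) → (Fin m → ι) → ℝ)
    (hP1 : ∀ M N : Fin 1 → ι, P 1 M N = if M 0 = N 0 then (1 : ℝ) else 0)
    (hPidem : ∀ m, 2 ≤ m → m ≤ k + 2 → ∀ M N : Fin m → ι,
      ∑ Q : Fin m → ι, P m M Q * P m Q N = P m M N)
    (hPE : ∀ m, 2 ≤ m → m ≤ k + 2 → ∀ M : Fin m → ι,
      nest bb E m M = ∑ N : Fin m → ι, P m M N • nest bb E m N)
    (hPnest : ∀ m : ℕ, 2 ≤ m + 1 → m + 1 ≤ k + 2 → ∀ M N : Fin (m + 1) → ι,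
      P (m + 1) M N = ∑ A : Fin m → ι, ∑ B : Fin m → ι,
        P m (Fin.tail M) A * P (m + 1) (Fin.cons (M 0) A) (Fin.cons (N 0) B) *
          P m B (Fin.tail N))
    (a : ℕ → ℝ)
    (ha1 : a 1 = 1)
    (hane : ∀ m, 1 ≤ m → m ≤ k + 2 → a m ≠ 0)
    (haP : ∀ m, 2 ≤ m → m ≤ k + 2 → ∀ M N : Fin m → ι,
      form (nest bb E m M) (nest bb F m N) = a m * P m M N) :
    ∀ (M N : Fin (k + 2) → ι),
      bb (nest bb E (k + 2) M) (nest bb F (k + 2) N)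
        = a (k + 2) •
            ∑ Q : Fin (k + 2) → ι, P (k + 2) M Q •
              ∑ i : Fin (k + 2),
                (∏ j ∈ Finset.univ.erase i, (if Q j = N j then (1 : ℝ) else 0)) •
                  bb (E (Q i)) (F (N i)) := by
  intro M N
  have hpair : ∀ m, 1 ≤ m → m ≤ k + 2 → ∀ A B : Fin m → ι,
      form (nest bb E m A) (nest bb F m B) = a m * P m A B := by
    intro m h1 h2
    rcases h1.eq_or_lt with rfl | h1
    · simp [nest, hEF, hP1, ha1]
    · exact haP m h1 h2
  have hidem : ∀ m, 1 ≤ m → m ≤ k + 2 → ∀ A B : Fin m → ι,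
      ∑ Q, P m A Q * P m Q B = P m A B := by
    intro m h1 h2
    rcases h1.eq_or_lt with rfl | h1
    · simp [hP1, sum_fin_one]
    · exact hPidem m h1 h2
  have hproj : ∀ m, 1 ≤ m → m ≤ k + 2 → ∀ A : Fin m → ι,
      nest bb E m A = ∑ B, P m A B • nest bb E m B := by
    intro m h1 h2
    rcases h1.eq_or_lt with rfl | h1
    · simp [nest, hP1, sum_fin_one]
    · exact hPE m h1 h2
  rw [bracket_nest_nest_eq_sum_update (k + 2) hgrade hanti hjac hforminv hE hF hspanE hP1 hPnest
    ha1 hane hpair hidem hproj (k + 2) (by omega) le_rfl M N]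
  exact congrArg _ (sum_smul_sum_prod_erase_ite_smul _ N fun i q => bb (E q) (F (N i))).symm

/-- Under the tensor-hierarchy hypotheses (with `p = k + 2 ≥ 2`):
`⟦E_{M1⋯Mp}, F^{N1⋯Np}⟧ = a_p Σ_P (ℙ_p)_{M1⋯Mp}{}^{P1⋯Pp} Σ_i δ_{P1}^{N1} ⋯ ⟦E_{Pi},F^{Ni}⟧ ⋯ δ_{Pp}^{Np}`. -/
theorem bracket_E_multi_with_F_multi
    {V : Type} [AddCommGroup V] [Module ℝ V]
    (U : ℤ → Submodule ℝ V)
    (bb : V →ₗ[ℝ] V →ₗ[ℝ] V)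
    (form : V →ₗ[ℝ] V →ₗ[ℝ] ℝ)
    (hgrade : ∀ (p q : ℤ) (x y : V), x ∈ U p → y ∈ U q → bb x y ∈ U (p + q))
    (hanti : ∀ (p q : ℤ) (x y : V), x ∈ U p → y ∈ U q →
      bb x y = (-((-1 : ℝ) ^ (p * q))) • bb y x)
    (hjac : ∀ (p q : ℤ) (x y z : V), x ∈ U p → y ∈ U q →
      bb (bb x y) z = bb x (bb y z) - ((-1 : ℝ) ^ (p * q)) • bb y (bb x z))
    (hform0 : ∀ (p q : ℤ) (x y : V), x ∈ U p → y ∈ U q → p + q ≠ 0 → form x y = 0)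
    (hforminv : ∀ x y z : V, form (bb x y) z = form x (bb y z))
    {ι : Type} [Fintype ι] [DecidableEq ι]
    (E F : ι → V)
    (hE : ∀ M, E M ∈ U (-1))
    (hF : ∀ M, F M ∈ U 1)
    (hEF : ∀ M N, form (E M) (F N) = if M = N then (1 : ℝ) else 0)
    (hspanE : ∀ m : ℕ, 1 ≤ m → U (-(m : ℤ)) ≤ Submodule.span ℝ (Set.range (nest bb E m)))
    (hspanF : ∀ m : ℕ, 1 ≤ m → U (m : ℤ) ≤ Submodule.span ℝ (Set.range (nest bb F m)))
    (k : ℕ)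
    (P : (m : ℕ) → (Fin m → ι) → (Fin m → ι) → ℝ)
    (hP1 : ∀ M N : Fin 1 → ι, P 1 M N = if M 0 = N 0 then (1 : ℝ) else 0)
    (hPidem : ∀ m, 2 ≤ m → m ≤ k + 2 → ∀ M N : Fin m → ι,
      ∑ Q : Fin m → ι, P m M Q * P m Q N = P m M N)
    (hPE : ∀ m, 2 ≤ m → m ≤ k + 2 → ∀ M : Fin m → ι,
      nest bb E m M = ∑ N : Fin m → ι, P m M N • nest bb E m N)
    (hPF : ∀ m, 2 ≤ m → m ≤ k + 2 → ∀ N : Fin m → ι,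
      nest bb F m N = ∑ M : Fin m → ι, P m M N • nest bb F m M)
    (hPnest : ∀ m : ℕ, 2 ≤ m + 1 → m + 1 ≤ k + 2 → ∀ M N : Fin (m + 1) → ι,
      P (m + 1) M N = ∑ A : Fin m → ι, ∑ B : Fin m → ι,
        P m (Fin.tail M) A * P (m + 1) (Fin.cons (M 0) A) (Fin.cons (N 0) B) *
          P m B (Fin.tail N))
    (a : ℕ → ℝ)
    (ha1 : a 1 = 1)
    (hane : ∀ m, 1 ≤ m → m ≤ k + 2 → a m ≠ 0)
    (haP : ∀ m, 2 ≤ m → m ≤ k + 2 → ∀ M N : Fin m → ι,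
      form (nest bb E m M) (nest bb F m N) = a m * P m M N) :
    ∀ (M N : Fin (k + 2) → ι),
      bb (nest bb E (k + 2) M) (nest bb F (k + 2) N)
        = a (k + 2) •
            ∑ Q : Fin (k + 2) → ι, P (k + 2) M Q •
              ∑ i : Fin (k + 2),
                (∏ j ∈ Finset.univ.erase i, (if Q j = N j then (1 : ℝ) else 0)) •
                  bb (E (Q i)) (F (N i)) :=
  bracket_E_multi_with_F_multi_general U bb form hgrade hanti hjac hforminv E F hE hF hEF hspanE k P
    hP1 hPidem hPE hPnest a ha1 hane haP
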